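/- arXiv:1705.00988 — 2 statements merged into one kernel-verified Lean document; each statement's English description precedes it below -/
import Mathlib

section
/- Fix β, B ∈ ℝ with β = cosh²(βB) and set q₀ = tanh(βB). For every integer k ≥ 1: if k is even, then ∂₁^k(G₂⁺ + G₂⁻)(0,q₀) = 0, ∂₁^{k−1}∂₂(G₂⁺ + G₂⁻)(0,q₀) = −2β^{k−1}·sinh(βB), ∂₁^k(G₂⁺ − G₂⁻)(0,q₀) = −2k·β^{k−1}·sinh(βB), and ∂₁^{k−1}∂₂(G₂⁺ − G₂⁻)(0,q₀) = 0; if k is odd, then ∂₁^k(G₂⁺ + G₂⁻)(0,q₀) = −2(k−1)·β^{k−1}·cosh(βB), ∂₁^{k−1}∂₂(G₂⁺ + G₂⁻)(0,q₀) = 0, ∂₁^k(G₂⁺ − G₂⁻)(0,q₀) = 0, and ∂₁^{k−1}∂₂(G₂⁺ − G₂⁻)(0,q₀) = −2β^{k−1}·cosh(βB). -/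
/-!
At `y = tanh(βB)` the addition formulas for `sinh` and `cosh` collapse the four functions of `x`
to `(2 / cosh βB) sinh βx - 2 cosh βB · x cosh βx`, `-2 sinh βB · x sinh βx`,
`-2 sinh βB · sinh βx` and `-2 cosh βB · cosh βx` (the last two for `∂₂`, which does not depend
on `y` at all). Their derivatives at `0` come from `sinh⁽ⁿ⁾ 0`, `cosh⁽ⁿ⁾ 0` and the Leibniz rule
`(x f)⁽ⁿ⁺¹⁾(0) = (n + 1) f⁽ⁿ⁾(0)`. The critical relation `β = cosh² βB` enters only in the
odd-order entry of the sum, turning `(2 / cosh βB) β^k` into `2 cosh βB β^(k-1)`.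
-/

/-- `G₂^{+}(x,y) = sinh(β(x+B)) − (x+y)·cosh(β(x+B))`. -/
noncomputable def G2p (β B x y : ℝ) : ℝ :=
  Real.sinh (β * (x + B)) - (x + y) * Real.cosh (β * (x + B))

/-- `G₂^{-}(x,y) = sinh(β(x−B)) − (x−y)·cosh(β(x−B))`. -/
noncomputable def G2m (β B x y : ℝ) : ℝ :=
  Real.sinh (β * (x - B)) - (x - y) * Real.cosh (β * (x - B))

open Real

theorem iteratedDeriv_succ_id_mul {𝕜 : Type*} [NontriviallyNormedField 𝕜] {f : 𝕜 → 𝕜}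
    {n : ℕ} {x : 𝕜} (hf : ContDiffAt 𝕜 (n + 1) f x) :
    iteratedDeriv (n + 1) (fun y => y * f y) x
      = (n + 1) * iteratedDeriv n f x + x * iteratedDeriv (n + 1) f x := by
  rw [iteratedDeriv_fun_mul (f := fun y => y) contDiffAt_fun_id hf, Finset.sum_range_succ',
    Finset.sum_range_succ']
  simp [iteratedDeriv_fun_id]

theorem Real.iteratedDeriv_sinh_zero (n : ℕ) :
    iteratedDeriv n sinh 0 = if Even n then 0 else 1 := by
  obtain ⟨k, rfl | rfl⟩ := Nat.even_or_odd' n <;> simp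

theorem Real.iteratedDeriv_cosh_zero (n : ℕ) :
    iteratedDeriv n cosh 0 = if Even n then 1 else 0 := by
  obtain ⟨k, rfl | rfl⟩ := Nat.even_or_odd' n <;> simp

theorem Real.iteratedDeriv_sinh_const_mul_zero (β : ℝ) (n : ℕ) :
    iteratedDeriv n (fun x => sinh (β * x)) 0 = if Even n then 0 else β ^ n := by
  rw [iteratedDeriv_comp_const_mul contDiff_sinh]
  simp [Real.iteratedDeriv_sinh_zero]

theorem Real.iteratedDeriv_cosh_const_mul_zero (β : ℝ) (n : ℕ) :
    iteratedDeriv n (fun x => cosh (β * x)) 0 = if Even n then β ^ n else 0 := by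
  rw [iteratedDeriv_comp_const_mul contDiff_cosh]
  simp [Real.iteratedDeriv_cosh_zero]

theorem G2p_add_G2m_tanh (β B x : ℝ) :
    G2p β B x (tanh (β * B)) + G2m β B x (tanh (β * B))
      = 2 / cosh (β * B) * sinh (β * x) - 2 * cosh (β * B) * (x * cosh (β * x)) := by
  simp only [G2p, G2m, tanh_eq_sinh_div_cosh, mul_add, mul_sub, sinh_add, cosh_add, sinh_sub,
    cosh_sub]
  field_simp
  linear_combination 2 * sinh (β * x) * cosh_sq_sub_sinh_sq (β * B)

theorem G2p_sub_G2m_tanh (β B x : ℝ) :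
    G2p β B x (tanh (β * B)) - G2m β B x (tanh (β * B))
      = -2 * sinh (β * B) * (x * sinh (β * x)) := by
  simp only [G2p, G2m, tanh_eq_sinh_div_cosh, mul_add, mul_sub, sinh_add, cosh_add, sinh_sub,
    cosh_sub]
  field_simp
  ring

theorem hasDerivAt_G2p_snd (β B x y : ℝ) :
    HasDerivAt (G2p β B x) (-cosh (β * (x + B))) y := by
  unfold G2p
  simpa using (((hasDerivAt_id y).const_add x).mul_const (cosh (β * (x + B)))).const_sub
    (sinh (β * (x + B)))

theorem hasDerivAt_G2m_snd (β B x y : ℝ) :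
    HasDerivAt (G2m β B x) (cosh (β * (x - B))) y := by
  unfold G2m
  simpa using (((hasDerivAt_id y).const_sub x).mul_const (cosh (β * (x - B)))).const_sub
    (sinh (β * (x - B)))

theorem deriv_snd_G2p_add_G2m (β B x y : ℝ) :
    deriv (fun y' => G2p β B x y' + G2m β B x y') y = -2 * sinh (β * B) * sinh (β * x) := by
  rw [((hasDerivAt_G2p_snd β B x y).fun_add (hasDerivAt_G2m_snd β B x y)).deriv, mul_add, mul_sub,
    cosh_add, cosh_sub]
  ring

theorem deriv_snd_G2p_sub_G2m (β B x y : ℝ) :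
    deriv (fun y' => G2p β B x y' - G2m β B x y') y = -2 * cosh (β * B) * cosh (β * x) := by
  rw [((hasDerivAt_G2p_snd β B x y).fun_sub (hasDerivAt_G2m_snd β B x y)).deriv, mul_add, mul_sub,
    cosh_add, cosh_sub]
  ring

theorem iteratedDeriv_G2p_add_G2m_tanh_zero (β B : ℝ) (n : ℕ) :
    iteratedDeriv (n + 1) (fun x => G2p β B x (tanh (β * B)) + G2m β B x (tanh (β * B))) 0
      = 2 / cosh (β * B) * (if Even (n + 1) then 0 else β ^ (n + 1))
        - 2 * cosh (β * B) * ((n + 1) * if Even n then β ^ n else 0) := by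
  simp_rw [G2p_add_G2m_tanh]
  rw [iteratedDeriv_fun_sub (by fun_prop) (by fun_prop), iteratedDeriv_const_mul_field,
    iteratedDeriv_const_mul_field, iteratedDeriv_succ_id_mul (by fun_prop),
    iteratedDeriv_sinh_const_mul_zero, iteratedDeriv_cosh_const_mul_zero, zero_mul, add_zero]

theorem iteratedDeriv_G2p_sub_G2m_tanh_zero (β B : ℝ) (n : ℕ) :
    iteratedDeriv (n + 1) (fun x => G2p β B x (tanh (β * B)) - G2m β B x (tanh (β * B))) 0
      = -2 * sinh (β * B) * ((n + 1) * if Even n then 0 else β ^ n) := by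
  simp_rw [G2p_sub_G2m_tanh]
  rw [iteratedDeriv_const_mul_field, iteratedDeriv_succ_id_mul (by fun_prop),
    iteratedDeriv_sinh_const_mul_zero, zero_mul, add_zero]

theorem iteratedDeriv_deriv_snd_G2p_add_G2m_zero (β B y : ℝ) (n : ℕ) :
    iteratedDeriv n (fun x => deriv (fun y' => G2p β B x y' + G2m β B x y') y) 0
      = -2 * sinh (β * B) * if Even n then 0 else β ^ n := by
  simp_rw [deriv_snd_G2p_add_G2m]
  rw [iteratedDeriv_const_mul_field, iteratedDeriv_sinh_const_mul_zero]

theorem iteratedDeriv_deriv_snd_G2p_sub_G2m_zero (β B y : ℝ) (n : ℕ) :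
    iteratedDeriv n (fun x => deriv (fun y' => G2p β B x y' - G2m β B x y') y) 0
      = -2 * cosh (β * B) * if Even n then β ^ n else 0 := by
  simp_rw [deriv_snd_G2p_sub_G2m]
  rw [iteratedDeriv_const_mul_field, iteratedDeriv_cosh_const_mul_zero]

/-- Entries of the matrix `D^k 𝒢₂` at the paramagnetic stationary
point `(0, tanh(βB))` on the critical curve `β = cosh²(βB)`. -/
theorem DkG2_at_paramagnetic_point_critical (β B : ℝ)
    (hcrit : β = Real.cosh (β * B) ^ 2) :
    ∀ k : ℕ, 1 ≤ k →
      (Even k →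
        iteratedDeriv k
            (fun x' => G2p β B x' (Real.tanh (β * B)) + G2m β B x' (Real.tanh (β * B))) 0
          = 0 ∧
        iteratedDeriv (k - 1)
            (fun x' => deriv (fun y' => G2p β B x' y' + G2m β B x' y') (Real.tanh (β * B))) 0
          = -2 * β ^ (k - 1) * Real.sinh (β * B) ∧
        iteratedDeriv k
            (fun x' => G2p β B x' (Real.tanh (β * B)) - G2m β B x' (Real.tanh (β * B))) 0
          = -2 * (k : ℝ) * β ^ (k - 1) * Real.sinh (β * B) ∧
        iteratedDeriv (k - 1)
            (fun x' => deriv (fun y' => G2p β B x' y' - G2m β B x' y') (Real.tanh (β * B))) 0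
          = 0) ∧
      (Odd k →
        iteratedDeriv k
            (fun x' => G2p β B x' (Real.tanh (β * B)) + G2m β B x' (Real.tanh (β * B))) 0
          = -2 * ((k : ℝ) - 1) * β ^ (k - 1) * Real.cosh (β * B) ∧
        iteratedDeriv (k - 1)
            (fun x' => deriv (fun y' => G2p β B x' y' + G2m β B x' y') (Real.tanh (β * B))) 0
          = 0 ∧
        iteratedDeriv k
            (fun x' => G2p β B x' (Real.tanh (β * B)) - G2m β B x' (Real.tanh (β * B))) 0
          = 0 ∧
        iteratedDeriv (k - 1)
            (fun x' => deriv (fun y' => G2p β B x' y' - G2m β B x' y') (Real.tanh (β * B))) 0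
          = -2 * β ^ (k - 1) * Real.cosh (β * B)) := by
  intro k hk
  obtain ⟨n, rfl⟩ := Nat.exists_eq_add_of_le' hk
  simp only [Nat.add_sub_cancel, Nat.cast_add_one, iteratedDeriv_G2p_add_G2m_tanh_zero,
    iteratedDeriv_G2p_sub_G2m_tanh_zero, iteratedDeriv_deriv_snd_G2p_add_G2m_zero,
    iteratedDeriv_deriv_snd_G2p_sub_G2m_zero]
  rcases Nat.even_or_odd n with hn | hn
  · have hn1 : ¬Even (n + 1) := by simpa [Nat.even_add_one] using hn
    refine ⟨fun h => absurd h hn1, fun _ => ?_⟩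
    simp only [hn, hn1, if_true, if_false]
    refine ⟨?_, by ring, by ring, by ring⟩
    field_simp
    linear_combination β ^ n * hcrit
  · have hn0 : ¬Even n := Nat.not_even_iff_odd.mpr hn
    have hn1 : Even (n + 1) := hn.add_one
    refine ⟨fun _ => ?_, fun h => absurd hn1 (Nat.not_even_iff_odd.mpr h)⟩
    simp only [hn0, hn1, if_true, if_false]
    exact ⟨by ring, by ring, by ring, by ring⟩
end

section
/- Let β, B > 0 satisfy β = cosh²(βB), let κ, θ ∈ ℝ, and define the operators Q₂⁺, Q₂⁻, Q₃⁰ and P as in the context, together with Q₃₁⁰g(x,y) = (2·(1 − 2βB·tanh(βB))·κ/cosh(βB) − 4β·sinh(βB)·θ)·x·∂₁g(x,y). Then for every f ∈ V and all (x,y) ∈ ℝ²: (Q₂⁻PQ₂⁺ + Q₃⁰ + Q₃₁⁰)f(x,y) = (2/3)·β·(2β − 3)·cosh(βB)·x³·∂₁f(x,y) + 2·((1 − 2βB·tanh(βB))·κ/cosh(βB) − 2β·sinh(βB)·θ)·x·∂₁f(x,y). -/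
/-- `Q⁺[a] g (x,y) = a·x^{k-1}·y·∂₁g(x,y)`. -/
noncomputable def Qplus (a : ℝ) (k : ℕ) (g : ℝ → ℝ → ℝ) : ℝ → ℝ → ℝ :=
  fun x y => a * x ^ (k - 1) * y * deriv (fun x' => g x' y) x

/-- `Q⁻[a] g (x,y) = a·x^k·∂₂g(x,y)`. -/
noncomputable def Qminus (a : ℝ) (k : ℕ) (g : ℝ → ℝ → ℝ) : ℝ → ℝ → ℝ :=
  fun x y => a * x ^ k * deriv (fun y' => g x y') y

/-- `Q⁰[a] g (x,y) = a·x^k·∂₁g(x,y)`. -/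
noncomputable def Qzero (a : ℝ) (k : ℕ) (g : ℝ → ℝ → ℝ) : ℝ → ℝ → ℝ :=
  fun x y => a * x ^ k * deriv (fun x' => g x' y) x

open scoped ContDiff in
lemma contDiff_top_deriv' {g : ℝ → ℝ} (h : ContDiff ℝ (⊤ : ℕ∞) g) : ContDiff ℝ (⊤ : ℕ∞) (deriv g) := by
  have h' : ContDiff ℝ (∞ + 1) g := by
    rw [show (∞ + 1 : WithTop ℕ∞) = ∞ by rfl]; exact h
  exact (contDiff_succ_iff_deriv.mp h').2.2

/-- On the critical curve `β = cosh²(βB)`, with limiting rescaled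
parameter increments `κ, θ`, for every `f ∈ V`:
`(Q₂⁻PQ₂⁺ + Q₃⁰ + Q₃₁⁰)f = (2/3)·β·(2β−3)·cosh(βB)·x³·∂₁f
    + 2·((1 − 2βB·tanh(βB))·κ/cosh(βB) − 2β·sinh(βB)·θ)·x·∂₁f`,
where `Q₃₁⁰ g = (2(1 − 2βB·tanh(βB))·κ/cosh(βB) − 4β·sinh(βB)·θ)·x·∂₁g`. -/

theorem limiting_drift_critical_curve_rescaled_parameters
    (β B : ℝ) (hβ : 0 < β) (hB : 0 < B)
    (hcrit : β = Real.cosh (β * B) ^ 2) (κ θ : ℝ)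
    (P : (ℝ → ℝ → ℝ) → ℝ → ℝ → ℝ)
    (hP : ∀ (g : ℝ → ℝ → ℝ) (r : ℕ) (c : ℕ → ℝ → ℝ),
      (∀ j, ContDiff ℝ (⊤ : ℕ∞) (c j) ∧ HasCompactSupport (c j)) →
      (∀ x y : ℝ, g x y = ∑ j ∈ Finset.range (r + 1), y ^ j * c j x) →
      ∀ x y : ℝ, P g x y
        = ∑ j ∈ Finset.Icc 1 r, y ^ j * c j x / (2 * (j : ℝ) * Real.cosh (β * B)))
    (f : ℝ → ℝ → ℝ) (r : ℕ) (c : ℕ → ℝ → ℝ)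
    (hc : ∀ j, ContDiff ℝ (⊤ : ℕ∞) (c j) ∧ HasCompactSupport (c j))
    (hf : ∀ x y : ℝ, f x y = ∑ j ∈ Finset.range (r + 1), y ^ j * c j x) :
    ∀ x y : ℝ,
      Qminus (-2 * β * Real.sinh (β * B)) 2
          (P (Qplus (-2 * β * Real.sinh (β * B)) 2 f)) x y
        + Qzero (-(2 / 3) * β ^ 2 * Real.cosh (β * B)) 3 f x y
        + Qzero (2 * (1 - 2 * β * B * Real.tanh (β * B)) * κ / Real.cosh (β * B)
            - 4 * β * Real.sinh (β * B) * θ) 1 f x y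
      = (2 / 3) * β * (2 * β - 3) * Real.cosh (β * B) * x ^ 3
          * deriv (fun x' => f x' y) x
        + 2 * ((1 - 2 * β * B * Real.tanh (β * B)) * κ / Real.cosh (β * B)
            - 2 * β * Real.sinh (β * B) * θ) * x * deriv (fun x' => f x' y) x := by
  intro x y
  have hchpos : (0:ℝ) < Real.cosh (β * B) := Real.cosh_pos _
  have hsh2 : Real.sinh (β * B) ^ 2 = Real.cosh (β * B) ^ 2 - 1 := Real.sinh_sq _
  set ch := Real.cosh (β * B) with hch
  set sh := Real.sinh (β * B) with hsh
  have hchne : ch ≠ 0 := ne_of_gt hchpos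
  set a : ℝ := -2 * β * sh with ha
  have hdiffc : ∀ j, Differentiable ℝ (c j) :=
    fun j => (hc j).1.differentiable (by simp)
  have hdf : ∀ (x y : ℝ), deriv (fun x' => f x' y) x
      = ∑ j ∈ Finset.range (r + 1), y ^ j * deriv (c j) x := by
    intro x y
    have hfe : (fun x' => f x' y) = fun x' => ∑ j ∈ Finset.range (r + 1), y ^ j * c j x' := by
      funext x'; exact hf x' y
    rw [hfe, deriv_fun_sum fun j _ => ((hdiffc j) x).const_mul _]
    exact Finset.sum_congr rfl fun j _ => deriv_const_mul _ ((hdiffc j) x)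
  set d : ℕ → ℝ → ℝ := fun j x => if j = 0 then 0 else a * x * deriv (c (j - 1)) x with hd
  have hdprop : ∀ j, ContDiff ℝ (⊤ : ℕ∞) (d j) ∧ HasCompactSupport (d j) := by
    intro j
    match j with
    | 0 =>
      constructor
      · simpa [hd] using contDiff_const (c := (0:ℝ))
      · have : d 0 = (fun _ : ℝ => (0:ℝ)) := by funext x; simp [hd]
        rw [this]; simp [HasCompactSupport, tsupport]
    | j + 1 =>
      have h1 : ContDiff ℝ (⊤ : ℕ∞) (deriv (c j)) := contDiff_top_deriv' (hc j).1
      constructor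
      · have he : d (j + 1) = fun x => a * x * deriv (c j) x := by funext x; simp [hd]
        rw [he]
        exact (contDiff_const.mul contDiff_id).mul h1
      · have he : d (j + 1) = (fun x => a * x) * deriv (c j) := by funext x; simp [hd]
        rw [he]
        exact HasCompactSupport.mul_left (hc j).2.deriv
  have hg : ∀ x y : ℝ, Qplus a 2 f x y = ∑ j ∈ Finset.range (r + 1 + 1), y ^ j * d j x := by
    intro x y
    have he : ∑ j ∈ Finset.range (r + 1 + 1), y ^ j * d j x
        = ∑ j ∈ Finset.range (r + 1), y ^ (j + 1) * (a * x * deriv (c j) x) := by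
      rw [Finset.sum_range_succ']
      simp [hd]
    rw [he]
    show a * x ^ (2 - 1) * y * deriv (fun x' => f x' y) x = _
    rw [hdf x y, Finset.mul_sum]
    exact Finset.sum_congr rfl fun j _ => by ring
  have hPg : ∀ y' : ℝ, P (Qplus a 2 f) x y'
      = ∑ j ∈ Finset.Icc 1 (r + 1), y' ^ j * d j x / (2 * (j : ℝ) * ch) :=
    fun y' => hP _ (r + 1) d hdprop hg x y'
  have hd2 : deriv (fun y' => P (Qplus a 2 f) x y') y
      = ∑ j ∈ Finset.Icc 1 (r + 1), (j : ℝ) * y ^ (j - 1) * (d j x / (2 * (j : ℝ) * ch)) := by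
    have heq : (fun y' => P (Qplus a 2 f) x y')
        = fun y' => ∑ j ∈ Finset.Icc 1 (r + 1), y' ^ j * (d j x / (2 * (j : ℝ) * ch)) := by
      funext y'
      rw [hPg y']
      exact Finset.sum_congr rfl fun j _ => mul_div_assoc _ _ _
    rw [heq, deriv_fun_sum fun j _ => (differentiableAt_pow j).mul_const _]
    refine Finset.sum_congr rfl fun j _ => ?_
    rw [deriv_mul_const (differentiableAt_pow j), deriv_pow_field]
  have hsum : (∑ j ∈ Finset.Icc 1 (r + 1), (j : ℝ) * y ^ (j - 1) * (d j x / (2 * (j : ℝ) * ch)))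
      = a * x / (2 * ch) * deriv (fun x' => f x' y) x := by
    rw [hdf x y, Finset.mul_sum, ← Finset.Ico_add_one_right_eq_Icc, Finset.sum_Ico_eq_sum_range]
    refine Finset.sum_congr rfl fun i _ => ?_
    have hd1 : d (1 + i) x = a * x * deriv (c i) x := by
      show (if 1 + i = 0 then 0 else a * x * deriv (c (1 + i - 1)) x) = _
      rw [if_neg (by omega), show 1 + i - 1 = i from by omega]
    rw [hd1, show 1 + i - 1 = i from by omega]
    have hne : ((1 + i : ℕ) : ℝ) ≠ 0 := Nat.cast_ne_zero.mpr (by omega)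
    field_simp
  have key : a * (a / (2 * ch)) + (-(2 / 3) * β ^ 2 * ch) = 2 / 3 * β * (2 * β - 3) * ch := by
    rw [ha]
    field_simp
    nlinarith [hsh2, hcrit, sq_nonneg ch, sq_nonneg sh]
  show a * x ^ 2 * deriv (fun y' => P (Qplus a 2 f) x y') y
      + -(2 / 3) * β ^ 2 * ch * x ^ 3 * deriv (fun x' => f x' y) x
      + (2 * (1 - 2 * β * B * Real.tanh (β * B)) * κ / ch - 4 * β * sh * θ) * x ^ 1
        * deriv (fun x' => f x' y) x
    = 2 / 3 * β * (2 * β - 3) * ch * x ^ 3 * deriv (fun x' => f x' y) x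
      + 2 * ((1 - 2 * β * B * Real.tanh (β * B)) * κ / ch - 2 * β * sh * θ) * x
        * deriv (fun x' => f x' y) x
  rw [hd2, hsum]
  linear_combination (x ^ 3 * deriv (fun x' => f x' y) x) * key
end
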